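/- Let $f, g : D_N \to \mathbb{R}$ and suppose: (i) $|f(x) - f(y)| \leq C d(x,y)/N$ and $|g(x)-g(y)| \leq C d(x,y)/N$ for all $x,y \in D_N$ (uniform Lipschitz at scale $N$); (ii) $|f(x)|, |g(x)| \leq C d(x, \partial D_N)/N$. Set $\epsilon = (N^{-d} \sum_{x\in D_N} (f(x)-g(x))^2)^{1/2}$. Then $\sup_{x \in D_N} |f(x)-g(x)| \leq c\, \epsilon^{2/(d+2)}$ for a constant $c$ depending only on $C$, $d$, and $D$ (via the volume bounds $c_1 K^d \leq |B(x,K) \cap \mathbb{Z}^d| \leq c_2 K^d$). -/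
import Mathlib


open scoped BigOperators

namespace SRW

abbrev Zd (d : ℕ) := Fin d → ℤ

variable {d : ℕ}

/-- ℓ¹ (graph) distance on ℤᵈ. -/
noncomputable def dist1 (x y : Zd d) : ℝ := ∑ i, |((x i : ℝ) - (y i : ℝ))|

/-- Nearest-neighbour adjacency on ℤᵈ. -/
def adj (x y : Zd d) : Prop := dist1 x y = 1

/-- One-step transition operator of the simple random walk:
`avg φ x = (1/(2d)) ∑_{y ∼ x} φ y`. -/
noncomputable def avg (φ : Zd d → ℝ) (x : Zd d) : ℝ :=
  (1 / (2 * (d : ℝ))) * ∑ i : Fin d,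
    (φ (Function.update x i (x i + 1)) + φ (Function.update x i (x i - 1)))

/-- `exitAt S T t x` is the probability that the simple random walk started at `x`
lies in `S` at times `0, …, t-1` and in `T` at time `t`. -/
noncomputable def exitAt (S T : Set (Zd d)) : ℕ → Zd d → ℝ
  | 0 => T.indicator 1
  | (t+1) => S.indicator (avg (exitAt S T t))

/-- Exterior vertex boundary of a set of lattice points. -/
def bdry (S : Set (Zd d)) : Set (Zd d) := {y | y ∉ S ∧ ∃ x ∈ S, adj x y}

/-- ℓ¹ distance from a point to a set. -/
noncomputable def distSet (x : Zd d) (A : Set (Zd d)) : ℝ := sInf (dist1 x '' A)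

/-- Embedding of ℤᵈ in Euclidean space. -/
noncomputable def emb (x : Zd d) : EuclideanSpace ℝ (Fin d) :=
  (EuclideanSpace.equiv (Fin d) ℝ).symm (fun i => (x i : ℝ))

/-- The discretisation `D_N = (N·D) ∩ ℤᵈ`, viewed as `{x ∈ ℤᵈ : x/N ∈ D}`. -/
def discr (D : Set (EuclideanSpace ℝ (Fin d))) (N : ℕ) : Set (Zd d) :=
  {x | (N : ℝ)⁻¹ • emb x ∈ D}

/-- Discrete Euclidean ball of radius `r` centred at the origin. -/
def ballZ (d : ℕ) (r : ℝ) : Set (Zd d) := {x | ‖emb x‖ < r}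

/-- `(lam, φ)` is an eigenpair of the simple random walk killed outside `S`. -/
def IsEigen (S : Set (Zd d)) (lam : ℝ) (φ : Zd d → ℝ) : Prop :=
  (∀ x ∈ S, avg φ x = lam * φ x) ∧ ∀ x ∉ S, φ x = 0

/-- Principal eigenvalue of the simple random walk killed outside `S`. -/
noncomputable def principalEig (S : Set (Zd d)) : ℝ :=
  sSup {lam : ℝ | ∃ φ : Zd d → ℝ, φ ≠ 0 ∧ IsEigen S lam φ}

/-- Positive reach / uniform exterior ball condition. -/
def PosReach (D : Set (EuclideanSpace ℝ (Fin d))) : Prop :=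
  ∃ ε > 0, ∀ x ∈ frontier D, ∃ z, dist z x = ε ∧ Metric.ball z ε ∩ D = ∅

end SRW

open SRW
open SRW Finset

namespace Stmt17
variable {d : ℕ}

/-- natural-valued ℓ¹ distance -/
def nd (x y : Zd d) : ℕ := ∑ i, (x i - y i).natAbs

lemma dist1_eq_nd (x y : Zd d) : dist1 x y = (nd x y : ℝ) := by
  rw [dist1, nd]
  push_cast
  refine Finset.sum_congr rfl fun i _ => ?_
  rw [Nat.cast_natAbs]
  push_cast
  ring_nf

lemma dist1_nonneg (x y : Zd d) : 0 ≤ dist1 x y :=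
  Finset.sum_nonneg fun i _ => abs_nonneg _

lemma dist1_triangle (x y z : Zd d) : dist1 x z ≤ dist1 x y + dist1 y z := by
  rw [dist1, dist1, dist1, ← Finset.sum_add_distrib]
  exact Finset.sum_le_sum fun i _ => abs_sub_le _ _ _

lemma distSet_le {x z : Zd d} {A : Set (Zd d)} (hz : z ∈ A) :
    distSet x A ≤ dist1 x z :=
  csInf_le ⟨0, fun r hr => by
    obtain ⟨a, _, rfl⟩ := hr; exact dist1_nonneg _ _⟩ ⟨z, hz, rfl⟩

lemma nd_update (x y : Zd d) (i : Fin d) (e : ℤ) :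
    nd (Function.update x i (x i + e)) y
      = (x i + e - y i).natAbs + ∑ j ∈ Finset.univ.erase i, (x j - y j).natAbs := by
  rw [nd, ← Finset.add_sum_erase _ _ (Finset.mem_univ i)]
  simp only [Function.update_self]
  congr 1
  exact Finset.sum_congr rfl fun j hj => by
    rw [Function.update_of_ne (Finset.mem_erase.mp hj).1]

lemma nd_split (x y : Zd d) (i : Fin d) :
    nd x y = (x i - y i).natAbs + ∑ j ∈ Finset.univ.erase i, (x j - y j).natAbs := by
  rw [nd, ← Finset.add_sum_erase _ _ (Finset.mem_univ i)]

end Stmt17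

open SRW Finset

namespace Stmt17b
open Stmt17
variable {d : ℕ}

lemma adj_update (x : Zd d) (i : Fin d) (e : ℤ) (he : e.natAbs = 1) :
    adj x (Function.update x i (x i + e)) := by
  show dist1 _ _ = 1
  rw [dist1_eq_nd, nd_split x _ i, Function.update_self]
  have : ∀ j ∈ Finset.univ.erase i,
      (x j - (Function.update x i (x i + e)) j).natAbs = 0 := by
    intro j hj
    rw [Function.update_of_ne (Finset.mem_erase.mp hj).1]
    omega
  rw [Finset.sum_eq_zero this]
  have : (x i - (x i + e)).natAbs = 1 := by omega
  rw [this]; norm_num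

/-- Path lemma: if no boundary point of `S` is within ℓ¹ distance `nd x y` of `x ∈ S`,
then `y ∈ S`. -/
lemma path_lemma (S : Set (Zd d)) :
    ∀ n : ℕ, ∀ x y : Zd d, x ∈ S → nd x y = n →
      (∀ z ∈ bdry S, (n : ℝ) < dist1 x z) → y ∈ S := by
  intro n
  induction n with
  | zero =>
    intro x y hx hn _
    have : x = y := by
      funext i
      have hi : (x i - y i).natAbs = 0 := by
        have := Finset.sum_eq_zero_iff.mp hn i (Finset.mem_univ i)
        exact this
      omega
    rwa [← this]
  | succ n ih =>
    intro x y hx hn hb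
    have hne : ∃ i, x i ≠ y i := by
      by_contra h
      push_neg at h
      have : nd x y = 0 := Finset.sum_eq_zero fun i _ => by rw [h i]; omega
      omega
    obtain ⟨i, hi⟩ := hne
    set e : ℤ := if x i < y i then 1 else -1 with he
    have heabs : e.natAbs = 1 := by rw [he]; split <;> rfl
    set x' := Function.update x i (x i + e) with hx'
    have hnd' : nd x' y = n := by
      rw [hx', nd_update, ]
      have h1 : (x i + e - y i).natAbs = (x i - y i).natAbs - 1 ∧ 1 ≤ (x i - y i).natAbs := by
        rw [he]
        constructor
        · split <;> omega
        · omega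
      have h2 := nd_split x y i
      omega
    have hdxx' : dist1 x x' = 1 := adj_update x i e heabs
    have hx'S : x' ∈ S := by
      by_contra hx'n
      have hzb : x' ∈ bdry S := ⟨hx'n, x, hx, adj_update x i e heabs⟩
      have := hb x' hzb
      rw [hdxx'] at this
      have : ((n : ℝ) + 1) < 1 := by push_cast at this ⊢; linarith
      have hn0 : (0:ℝ) ≤ n := Nat.cast_nonneg n
      linarith
    refine ih x' y hx'S hnd' ?_
    intro z hz
    have h1 := hb z hz
    have h2 := dist1_triangle x x' z
    rw [hdxx'] at h2
    push_cast at h1 ⊢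
    linarith

end Stmt17b

open SRW Finset

namespace Stmt17c
open Stmt17 Stmt17b
variable {d : ℕ}

lemma emb_apply (x : Zd d) (i : Fin d) : emb x i = (x i : ℝ) := rfl

lemma abs_coord_le_norm_emb (x : Zd d) (i : Fin d) : |(x i : ℝ)| ≤ ‖emb x‖ := by
  rw [EuclideanSpace.norm_eq, ← Real.sqrt_sq_eq_abs]
  apply Real.sqrt_le_sqrt
  have h1 : ((x i:ℝ))^2 = ‖emb x i‖^2 := by
    rw [emb_apply, Real.norm_eq_abs, sq_abs]
  rw [h1]
  exact Finset.single_le_sum (fun j _ => sq_nonneg ‖emb x j‖) (Finset.mem_univ i)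

lemma norm_emb_lt {D : Set (EuclideanSpace ℝ (Fin d))} {R : ℝ}
    (hDR : D ⊆ Metric.ball 0 R) {N : ℕ} (hN : 1 ≤ N) {x : Zd d}
    (hx : x ∈ discr D N) : ‖emb x‖ < N * R := by
  have h := hDR hx
  rw [Metric.mem_ball, dist_zero_right, norm_smul] at h
  have hN0 : (0:ℝ) < N := by exact_mod_cast hN
  rw [norm_inv, Real.norm_natCast] at h
  calc ‖emb x‖ = N * ((N:ℝ)⁻¹ * ‖emb x‖) := by field_simp
  _ < N * R := by
      apply mul_lt_mul_of_pos_left h hN0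

lemma discr_finite {D : Set (EuclideanSpace ℝ (Fin d))} {R : ℝ}
    (hDR : D ⊆ Metric.ball 0 R) {N : ℕ} (hN : 1 ≤ N) :
    (discr D N).Finite := by
  have hsub : discr D N ⊆ Set.pi Set.univ
      (fun i : Fin d => Set.Icc (-⌈(N:ℝ)*R⌉) ⌈(N:ℝ)*R⌉) := by
    intro x hx i _
    have h1 := abs_coord_le_norm_emb x i
    have h2 := norm_emb_lt hDR hN hx
    have h3 : |(x i : ℝ)| ≤ (N:ℝ)*R := le_of_lt (lt_of_le_of_lt h1 h2)
    have h4 : (x i : ℝ) ≤ ⌈(N:ℝ)*R⌉ := le_trans (le_abs_self _)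
      (le_trans h3 (Int.le_ceil _))
    have h5 : -(⌈(N:ℝ)*R⌉:ℝ) ≤ (x i : ℝ) := by
      have h6 : -((N:ℝ)*R) ≤ (x i:ℝ) := by linarith [abs_le.mp h3 |>.1]
      linarith [Int.le_ceil ((N:ℝ)*R)]
    exact ⟨by exact_mod_cast h5, by exact_mod_cast h4⟩
  exact Set.Finite.subset (Set.Finite.pi fun i => Set.finite_Icc _ _) hsub

/-- There is a boundary point of `discr D N` within ℓ¹ distance `⌈2NR⌉₊` of any
point of `discr D N`. -/
lemma exists_bdry_near {D : Set (EuclideanSpace ℝ (Fin d))} {R : ℝ} (hR : 0 < R)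
    (hDR : D ⊆ Metric.ball 0 R) {N : ℕ} (hN : 1 ≤ N) (hd : 1 ≤ d) {x : Zd d}
    (hx : x ∈ discr D N) :
    ∃ z ∈ bdry (discr D N), dist1 x z ≤ (⌈2*(N:ℝ)*R⌉₊ : ℝ) := by
  have hd' : 0 < d := hd
  have hN0 : (1:ℝ) ≤ N := by exact_mod_cast hN
  set i0 : Fin d := ⟨0, hd'⟩
  set n : ℕ := ⌈2*(N:ℝ)*R⌉₊ with hn
  set y : Zd d := Function.update x i0 (x i0 + n) with hy
  have hyval : (y i0 : ℝ) = (x i0 : ℝ) + n := by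
    rw [hy, Function.update_self]; push_cast; ring
  have hynot : y ∉ discr D N := by
    intro hyD
    have h1 := abs_coord_le_norm_emb y i0
    have h2 := norm_emb_lt hDR hN hyD
    have hxc := abs_lt.mp (lt_of_le_of_lt (abs_coord_le_norm_emb x i0)
      (norm_emb_lt hDR hN hx))
    have hnR : 2*(N:ℝ)*R ≤ n := Nat.le_ceil _
    have hNR : (0:ℝ) < N*R := by positivity
    have := le_abs_self ((y i0 : ℝ))
    linarith
  have hnd : nd x y = n := by
    rw [nd_split x y i0, hy, Function.update_self]
    have h1 : (x i0 - (x i0 + (n:ℤ))).natAbs = n := by omega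
    have h2 : ∀ j ∈ Finset.univ.erase i0,
        (x j - (Function.update x i0 (x i0 + (n:ℤ))) j).natAbs = 0 := fun j hj => by
      rw [Function.update_of_ne (Finset.mem_erase.mp hj).1]; omega
    rw [Finset.sum_eq_zero h2, h1]
    omega
  by_contra hcon
  push_neg at hcon
  have : ∀ z ∈ bdry (discr D N), ((n:ℕ):ℝ) < dist1 x z := fun z hz => hcon z hz
  exact hynot (path_lemma (discr D N) n x y hx hnd this)

end Stmt17c


open Stmt17 Stmt17b Stmt17c
set_option maxHeartbeats 1000000
/-- deterministic interpolation lemma: for functions on `D_N` that are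
Lipschitz at scale `N` and bounded by `C d(·,∂D_N)/N`, the sup-norm of the difference
is controlled by the `L²`-norm to the power `2/(d+2)`. -/
theorem stmt_17 (d : ℕ) (hd : 1 ≤ d) (D : Set (EuclideanSpace ℝ (Fin d)))
    (hDopen : IsOpen D) (hDbdd : Bornology.IsBounded D) :
    ∀ C : ℝ, 0 < C → ∃ c > 0, ∀ N : ℕ, 1 ≤ N → ∀ f g : Zd d → ℝ,
      (∀ x y : Zd d, x ∈ discr D N → y ∈ discr D N → |f x - f y| ≤ C * dist1 x y / N) →
      (∀ x y : Zd d, x ∈ discr D N → y ∈ discr D N → |g x - g y| ≤ C * dist1 x y / N) →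
      (∀ x ∈ discr D N, |f x| ≤ C * distSet x (bdry (discr D N)) / N) →
      (∀ x ∈ discr D N, |g x| ≤ C * distSet x (bdry (discr D N)) / N) →
      ∀ x ∈ discr D N,
        |f x - g x| ≤ c * ((((N : ℝ) ^ d)⁻¹ *
          ∑' y : Zd d, (discr D N).indicator (fun y => (f y - g y) ^ 2) y) ^ ((1 : ℝ) / (d + 2))) := by
  intro C hC
  obtain ⟨R0, hR0⟩ := hDbdd.subset_ball 0
  set R : ℝ := max R0 1 with hRdef
  have hR1 : (1:ℝ) ≤ R := le_max_right _ _
  have hRpos : (0:ℝ) < R := lt_of_lt_of_le one_pos hR1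
  have hDR : D ⊆ Metric.ball 0 R := hR0.trans (Metric.ball_subset_ball (le_max_left _ _))
  clear_value R
  have hd1 : (1:ℝ) ≤ (d:ℝ) := by exact_mod_cast hd
  set c0 : ℝ := 2*C*(2*R+2) with hc0def
  have hc0pos : 0 < c0 := by rw [hc0def]; positivity
  clear_value c0
  set cf : ℝ := c0 + 1 + 2*C*(1+(d:ℝ)) + Real.sqrt ((d:ℝ)^d) with hcfdef
  have hsq : 0 ≤ Real.sqrt ((d:ℝ)^d) := Real.sqrt_nonneg _
  have hCd : 0 < 2*C*(1+(d:ℝ)) := by positivity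
  have hcfpos : 0 < cf := by rw [hcfdef]; positivity
  clear_value cf
  refine ⟨cf, hcfpos, ?_⟩
  intro N hN f g hfL hgL hfB hgB x hx
  have hNpos : (0:ℝ) < N := by exact_mod_cast hN
  have hN1 : (1:ℝ) ≤ N := by exact_mod_cast hN
  have hdivmono : ∀ a b : ℝ, a ≤ b → C * a / N ≤ C * b / N := fun a b hab =>
    (div_le_div_iff_of_pos_right hNpos).mpr (mul_le_mul_of_nonneg_left hab hC.le)
  have Dfin : (discr D N).Finite := discr_finite hDR hN
  have habs : ∀ a b : ℝ, |a - b| ≤ |a| + |b| := fun a b => by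
    rw [sub_eq_add_neg]
    exact (abs_add_le _ _).trans (by rw [abs_neg])
  -- rewrite the tsum as a finite sum
  have hT : (∑' y : Zd d, (discr D N).indicator (fun y => (f y - g y) ^ 2) y)
      = ∑ y ∈ Dfin.toFinset, (f y - g y)^2 := by
    rw [tsum_eq_sum (s := Dfin.toFinset)
      (fun b hb => Set.indicator_of_notMem (fun hmem => hb (Dfin.mem_toFinset.mpr hmem)) _)]
    exact Finset.sum_congr rfl fun y hy =>
      Set.indicator_of_mem (Dfin.mem_toFinset.mp hy) _
  rw [hT]
  set F : Finset (Zd d) := Dfin.toFinset with hFdef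
  have hxF : x ∈ F := by rw [hFdef]; exact Dfin.mem_toFinset.mpr hx
  have hFD : ∀ y : Zd d, y ∈ discr D N → y ∈ F := fun y hy => by
    rw [hFdef]; exact Dfin.mem_toFinset.mpr hy
  clear_value F
  set T : ℝ := ∑ y ∈ F, (f y - g y)^2 with hTdef
  have hT0 : 0 ≤ T := by
    rw [hTdef]; exact Finset.sum_nonneg fun y _ => sq_nonneg _
  have hsingle : (f x - g x)^2 ≤ T := by
    rw [hTdef]
    exact Finset.single_le_sum (fun y _ => sq_nonneg (f y - g y)) hxF
  have hsubsum : ∀ Q : Finset (Zd d), (∀ y ∈ Q, y ∈ F) → ∑ y ∈ Q, (f y - g y)^2 ≤ T := by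
    intro Q hQ
    rw [hTdef]
    exact Finset.sum_le_sum_of_subset_of_nonneg hQ fun y _ _ => sq_nonneg _
  clear_value T
  set S : ℝ := ((N:ℝ)^d)⁻¹ * T with hSdef
  have hS0 : 0 ≤ S := by
    rw [hSdef]
    exact mul_nonneg (inv_nonneg.mpr (pow_nonneg hNpos.le d)) hT0
  have hTS : T = (N:ℝ)^d * S := by
    rw [hSdef, ← mul_assoc, mul_inv_cancel₀ (by positivity : ((N:ℝ)^d) ≠ 0), one_mul]
  clear_value S
  set ε : ℝ := S ^ ((1:ℝ)/((d:ℝ)+2)) with hεdef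
  have hε0 : 0 ≤ ε := by rw [hεdef]; exact Real.rpow_nonneg hS0 _
  have hd2 : (0:ℝ) < (d:ℝ)+2 := by positivity
  have hεpow : ε ^ (d+2 : ℕ) = S := by
    rw [hεdef, ← Real.rpow_natCast (S ^ ((1:ℝ)/((d:ℝ)+2))) (d+2), ← Real.rpow_mul hS0]
    push_cast
    rw [one_div, inv_mul_cancel₀ (ne_of_gt hd2), Real.rpow_one]
  have hεS : ∀ a : ℝ, 1 ≤ a → 1 ≤ a ^ ((1:ℝ)/((d:ℝ)+2)) := by
    intro a ha
    calc (1:ℝ) = (1:ℝ) ^ ((1:ℝ)/((d:ℝ)+2)) := (Real.one_rpow _).symm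
    _ ≤ a ^ ((1:ℝ)/((d:ℝ)+2)) := Real.rpow_le_rpow zero_le_one ha (by positivity)
  -- Lipschitz transfer
  have key : ∀ y ∈ discr D N, |f x - g x| ≤ |f y - g y| + 2*(C * dist1 x y / N) := by
    intro y hy
    have h1 := hfL x y hx hy
    have h2 := hgL x y hx hy
    have e : f x - g x = (f y - g y) + ((f x - f y) - (g x - g y)) := by ring
    have h3 : |f x - g x| ≤ |f y - g y| + (|f x - f y| + |g x - g y|) := by
      rw [e]
      exact (abs_add_le _ _).trans (by gcongr; exact habs _ _)
    linarith
  -- boundary bound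
  have hbd : ∀ z ∈ bdry (discr D N), |f x - g x| ≤ 2*(C * dist1 x z / N) := by
    intro z hz
    have hds := distSet_le (x := x) hz
    have h1 := hfB x hx
    have h2 := hgB x hx
    have hmono := hdivmono _ _ hds
    have h3 := habs (f x) (g x)
    linarith
  by_cases hS1 : 1 ≤ S
  · -- big S: uniform bound
    have hε1 : 1 ≤ ε := by rw [hεdef]; exact hεS S hS1
    obtain ⟨z, hz, hzd⟩ := exists_bdry_near hRpos hDR hN hd hx
    have hceil : (⌈2*(N:ℝ)*R⌉₊ : ℝ) < 2*(N:ℝ)*R + 1 := Nat.ceil_lt_add_one (by positivity)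
    have h1 := hbd z hz
    have h2 : 2*(C * dist1 x z / N) ≤ c0 := by
      have h3 : dist1 x z ≤ 2*(N:ℝ)*R + 1 := by linarith
      have h4 := hdivmono _ _ h3
      have h5 : C * (2*(N:ℝ)*R + 1) / N ≤ C * (2*R+2) := by
        rw [div_le_iff₀ hNpos]
        nlinarith [mul_le_mul_of_nonneg_left hN1 hC.le, mul_nonneg hC.le hNpos.le,
          mul_pos hC hRpos]
      rw [hc0def]
      linarith
    have h6 : c0 * 1 ≤ cf * ε := by
      apply mul_le_mul _ hε1 zero_le_one hcfpos.le
      rw [hcfdef]; linarith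
    linarith
  · push_neg at hS1
    by_cases hNε : (N:ℝ) * ε ≤ 1
    · -- tiny ε: single-point bound
      have hTe : T ≤ ε^2 := by
        rw [hTS, ← hεpow, pow_add]
        have h1 : (N:ℝ)^d * (ε^d * ε^2) = ((N:ℝ)*ε)^d * ε^2 := by
          rw [mul_pow]; ring
        rw [h1]
        have h2 : ((N:ℝ)*ε)^d ≤ 1 := pow_le_one₀ (by positivity) hNε
        calc ((N:ℝ)*ε)^d * ε^2 ≤ 1 * ε^2 := mul_le_mul_of_nonneg_right h2 (sq_nonneg ε)
        _ = ε^2 := one_mul _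
      have h3 : |f x - g x| ≤ ε := by
        apply le_of_pow_le_pow_left₀ two_ne_zero hε0
        rw [sq_abs]
        linarith
      have h5 : 1 * ε ≤ cf * ε := by
        apply mul_le_mul_of_nonneg_right _ hε0
        rw [hcfdef]; linarith
      linarith
    · push_neg at hNε
      have hεpos : 0 < ε := by
        rcases lt_or_eq_of_le hε0 with h | h
        · exact h
        · rw [← h] at hNε; simp at hNε; linarith
      set m : ℕ := ⌈(N:ℝ)*ε/(d:ℝ)⌉₊ with hmdef
      have hmpos : 0 < m := by
        rw [hmdef]; exact Nat.ceil_pos.mpr (by positivity)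
      have hmub : (m:ℝ) < (N:ℝ)*ε/(d:ℝ) + 1 := by
        rw [hmdef]; exact Nat.ceil_lt_add_one (by positivity)
      have hmlb : (N:ℝ)*ε/(d:ℝ) ≤ m := by rw [hmdef]; exact Nat.le_ceil _
      clear_value m
      set R1 : ℕ := d * m with hR1def
      have hR1cast : (R1:ℝ) = (d:ℝ) * m := by rw [hR1def]; push_cast; ring
      clear_value R1
      have hdpos : (0:ℝ) < d := by linarith
      have hR1ub : (R1:ℝ) ≤ (N:ℝ)*ε*(1+(d:ℝ)) := by
        have h2 : (d:ℝ) * ((N:ℝ)*ε/(d:ℝ)) = (N:ℝ)*ε := by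
          rw [mul_div_assoc']
          rw [mul_comm, mul_div_assoc, div_self (ne_of_gt hdpos), mul_one]
        have h3 := mul_lt_mul_of_pos_left hmub hdpos
        have h4 := mul_lt_mul_of_pos_left hNε hdpos
        have h5 : (d:ℝ)*((N:ℝ)*ε/(d:ℝ) + 1) = (d:ℝ)*((N:ℝ)*ε/(d:ℝ)) + d := by ring
        have h6 : (N:ℝ)*ε*(1+(d:ℝ)) = (N:ℝ)*ε + (d:ℝ)*((N:ℝ)*ε) := by ring
        rw [hR1cast]
        linarith
      have hbound2 : 2*(C * (R1:ℝ) / N) ≤ 2*C*(1+(d:ℝ)) * ε := by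
        have h1 := hdivmono _ _ hR1ub
        have h2 : C * ((N:ℝ)*ε*(1+(d:ℝ))) / N = C*(1+(d:ℝ))*ε := by
          rw [div_eq_iff (ne_of_gt hNpos)]; ring
        linarith
      have hcfb : 2*C*(1+(d:ℝ)) * ε ≤ cf * ε := by
        apply mul_le_mul_of_nonneg_right _ hε0
        rw [hcfdef]; linarith
      by_cases hcase : ∃ z ∈ bdry (discr D N), dist1 x z ≤ (R1:ℝ)
      · obtain ⟨z, hz, hzd⟩ := hcase
        have h1 := hbd z hz
        have h2 := hdivmono _ _ hzd
        linarith
      · push_neg at hcase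
        -- cube averaging
        set Q : Finset (Zd d) := Fintype.piFinset (fun i => Finset.Icc (x i - m) (x i + m))
          with hQdef
        have hQnd : ∀ y ∈ Q, (nd x y : ℝ) ≤ (R1:ℝ) := by
          intro y hy
          rw [hQdef] at hy
          have h1 : ∀ i, (x i - y i).natAbs ≤ m := by
            intro i
            have := Fintype.mem_piFinset.mp hy i
            rw [Finset.mem_Icc] at this
            omega
          have h2 : nd x y ≤ d * m := by
            rw [nd]
            calc ∑ i, (x i - y i).natAbs ≤ ∑ _i : Fin d, m :=
              Finset.sum_le_sum fun i _ => h1 i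
            _ = d * m := by rw [Finset.sum_const]; simp [Finset.card_univ, mul_comm]
          rw [hR1def]
          exact_mod_cast h2
        have hcard : Q.card = (2*m+1)^d := by
          rw [hQdef, Fintype.card_piFinset]
          have h1 : ∀ i : Fin d, (Finset.Icc (x i - (m:ℤ)) (x i + m)).card = 2*m+1 := by
            intro i
            rw [Int.card_Icc]
            omega
          rw [Finset.prod_congr rfl fun i _ => h1 i, Finset.prod_const]
          simp [Finset.card_univ]
        clear_value Q
        have hQD : ∀ y ∈ Q, y ∈ discr D N := by
          intro y hy
          refine path_lemma (discr D N) (nd x y) x y hx rfl ?_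
          intro z hz
          exact lt_of_le_of_lt (hQnd y hy) (hcase z hz)
        have hQd1 : ∀ y ∈ Q, dist1 x y ≤ (R1:ℝ) := fun y hy => by
          rw [dist1_eq_nd]; exact hQnd y hy
        set B : ℝ := |f x - g x| - 2*(C * (R1:ℝ) / N) with hBdef
        clear_value B
        by_cases hB : B ≤ 0
        · have : |f x - g x| ≤ 2*(C * (R1:ℝ) / N) := by rw [hBdef] at hB; linarith
          linarith
        · push_neg at hB
          have hBsq : ∀ y ∈ Q, B^2 ≤ (f y - g y)^2 := by
            intro y hy
            have h1 := key y (hQD y hy)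
            have h2 := hdivmono _ _ (hQd1 y hy)
            have h3 : B ≤ |f y - g y| := by rw [hBdef]; linarith
            calc B^2 ≤ |f y - g y|^2 := pow_le_pow_left₀ hB.le h3 2
            _ = (f y - g y)^2 := sq_abs _
          have hQsum : ((Q.card : ℕ) : ℝ) * B^2 ≤ T := by
            have h1 : Q.card • B^2 ≤ ∑ y ∈ Q, (f y - g y)^2 :=
              Finset.card_nsmul_le_sum Q _ _ hBsq
            rw [nsmul_eq_mul] at h1
            have h2 := hsubsum Q (fun y hy => hFD y (hQD y hy))
            linarith
          have hcard' : ((Q.card : ℕ) : ℝ) = (((2*m+1:ℕ)):ℝ)^d := by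
            rw [hcard]; push_cast; ring
          have h4 : (((2*m+1:ℕ)):ℝ)^d * B^2 ≤ T := by rw [← hcard']; exact hQsum
          have h2m : (N:ℝ)*ε/(d:ℝ) ≤ ((2*m+1 : ℕ):ℝ) := by
            push_cast
            linarith
          have h1 : ((N:ℝ)*ε/(d:ℝ))^d ≤ (((2*m+1:ℕ)):ℝ)^d :=
            pow_le_pow_left₀ (by positivity) h2m d
          have h3 : T = ((N:ℝ)*ε)^d * ε^2 := by
            rw [hTS, ← hεpow, pow_add, mul_pow]; ring
          have hPd : ((N:ℝ)*ε/(d:ℝ))^d * B^2 ≤ ((N:ℝ)*ε)^d * ε^2 := by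
            have h5 := mul_le_mul_of_nonneg_right h1 (sq_nonneg B)
            linarith
          have hdd : (0:ℝ) < (d:ℝ)^d := by positivity
          have hP : (0:ℝ) < ((N:ℝ)*ε)^d := by positivity
          have hB2 : B^2 ≤ (d:ℝ)^d * ε^2 := by
            have h5 : ((N:ℝ)*ε/(d:ℝ))^d = ((N:ℝ)*ε)^d / (d:ℝ)^d := div_pow _ _ _
            rw [h5, div_mul_eq_mul_div, div_le_iff₀ hdd] at hPd
            have h6 : ((N:ℝ)*ε)^d * B^2 ≤ ((N:ℝ)*ε)^d * ((d:ℝ)^d * ε^2) := by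
              calc ((N:ℝ)*ε)^d * B^2 ≤ ((N:ℝ)*ε)^d * ε^2 * (d:ℝ)^d := hPd
              _ = ((N:ℝ)*ε)^d * ((d:ℝ)^d * ε^2) := by ring
            exact le_of_mul_le_mul_left h6 hP
          have hBle : B ≤ Real.sqrt ((d:ℝ)^d) * ε := by
            have h5 : (Real.sqrt ((d:ℝ)^d) * ε)^2 = (d:ℝ)^d * ε^2 := by
              rw [mul_pow, Real.sq_sqrt hdd.le]
            apply le_of_pow_le_pow_left₀ two_ne_zero (by positivity)
            rw [h5]; exact hB2
          have h7 : (2*C*(1+(d:ℝ)) + Real.sqrt ((d:ℝ)^d)) * ε ≤ cf * ε := by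
            apply mul_le_mul_of_nonneg_right _ hε0
            rw [hcfdef]; linarith
          have h8 : |f x - g x| = B + 2*(C * (R1:ℝ) / N) := by rw [hBdef]; ring
          have h9 : (2*C*(1+(d:ℝ)) + Real.sqrt ((d:ℝ)^d)) * ε
              = 2*C*(1+(d:ℝ))*ε + Real.sqrt ((d:ℝ)^d)*ε := by ring
          linarith
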